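/- arXiv:1809.02852 — 2 statements merged into one kernel-verified Lean document; each statement's English description precedes it below -/
import Mathlib

section
/- The function f(y|θ) = δ^{1/θ₂} / (2^{1/θ₂} Γ(1 + 1/θ₂)) · exp(-(1/2)·(δ/A(y))·|y|^{θ₂}), where δ = 2θ₁^{θ₂}(1-θ₁)^{θ₂}/(θ₁^{θ₂}+(1-θ₁)^{θ₂}) and A(y) = [1/2 + sign(y)(1/2 - θ₁)]^{θ₂}, is a probability density function on ℝ, i.e., it is nonnegative and its integral over ℝ equals 1. -/
open MeasureTheory Real

noncomputable def apdDelta (t1 t2 : ℝ) : ℝ :=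
  2 * t1 ^ t2 * (1 - t1) ^ t2 / (t1 ^ t2 + (1 - t1) ^ t2)

noncomputable def apdA (t1 t2 y : ℝ) : ℝ :=
  (1 / 2 + Real.sign y * (1 / 2 - t1)) ^ t2

noncomputable def apdDensity (t1 t2 y : ℝ) : ℝ :=
  apdDelta t1 t2 ^ (1 / t2) / ((2 : ℝ) ^ (1 / t2) * Real.Gamma (1 + 1 / t2)) *
    Real.exp (-(1 / 2) * (apdDelta t1 t2 / apdA t1 t2 y) * |y| ^ t2)

/-! On each half-line the density is a generalized Gaussian `exp (-(δ / 2) * (|y| / s) ^ θ₂)`,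
with scale `s = θ₁` on the left and `s = 1 - θ₁` on the right. Rescaling turns the integral of
each half into `s * (δ / 2) ^ (-1 / θ₂) * Γ (1 / θ₂ + 1)`, and the scales add up to
`θ₁ + (1 - θ₁) = 1`; any `δ > 0` would do. -/

open Set

theorem integral_eq_integral_Ioi_add_integral_Ioi {E : Type*} [NormedAddCommGroup E]
    [NormedSpace ℝ E] {f g h : ℝ → E} (hg : IntegrableOn g (Ioi 0)) (hh : IntegrableOn h (Ioi 0))
    (hf_neg : ∀ y < 0, f y = g (-y)) (hf_pos : ∀ y > 0, f y = h y) :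
    ∫ y, f y = (∫ x in Ioi 0, g x) + ∫ x in Ioi 0, h x := by
  have hf_Iio : IntegrableOn f (Iio 0) :=
    (IntegrableOn.comp_neg_Iio (c := 0) (by rwa [neg_zero])).congr_fun
      (fun y hy => (hf_neg y hy).symm) measurableSet_Iio
  have hf_Ioi : IntegrableOn f (Ioi 0) :=
    hh.congr_fun (fun y hy => (hf_pos y hy).symm) measurableSet_Ioi
  have hf_Ici : IntegrableOn f (Ici 0) := (integrableOn_Ici_iff_integrableOn_Ioi).2 hf_Ioi
  rw [← intervalIntegral.integral_Iio_add_Ici hf_Iio hf_Ici, integral_Ici_eq_integral_Ioi,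
    setIntegral_congr_fun measurableSet_Iio hf_neg,
    setIntegral_congr_fun measurableSet_Ioi hf_pos, ← integral_Iic_eq_integral_Iio,
    integral_comp_neg_Iic, neg_zero]

theorem integral_exp_neg_mul_div_rpow {p a b : ℝ} (hp : 0 < p) (ha : 0 < a) (hb : 0 < b) :
    ∫ x in Ioi 0, exp (-b * (x / a) ^ p) = a * (b ^ (-1 / p) * Gamma (1 / p + 1)) := by
  simp_rw [div_eq_mul_inv _ a]
  rw [integral_comp_mul_right_Ioi (fun x => exp (-b * x ^ p)) 0 (inv_pos.mpr ha), zero_mul,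
    inv_inv, integral_exp_neg_mul_rpow hp hb, smul_eq_mul]

theorem integrableOn_exp_neg_mul_div_rpow {p a b : ℝ} (hp : 0 < p) (ha : 0 < a) (hb : 0 < b) :
    IntegrableOn (fun x => exp (-b * (x / a) ^ p)) (Ioi 0) :=
  .of_integral_ne_zero <| by rw [integral_exp_neg_mul_div_rpow hp ha hb]; positivity

noncomputable def apdNormConst (t1 t2 : ℝ) : ℝ :=
  apdDelta t1 t2 ^ (1 / t2) / ((2 : ℝ) ^ (1 / t2) * Gamma (1 + 1 / t2))

section

variable {t1 t2 : ℝ}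

theorem apdDelta_pos (h1 : t1 ∈ Ioo 0 1) : 0 < apdDelta t1 t2 := by
  obtain ⟨ht1_pos, ht1_lt⟩ := h1
  have : 0 < 1 - t1 := sub_pos.mpr ht1_lt
  unfold apdDelta
  positivity

theorem apdNormConst_eq (h1 : t1 ∈ Ioo 0 1) :
    apdNormConst t1 t2 = ((apdDelta t1 t2 / 2) ^ (-1 / t2) * Gamma (1 / t2 + 1))⁻¹ := by
  have hδ := (apdDelta_pos (t2 := t2) h1).le
  rw [apdNormConst, neg_div, rpow_neg (by positivity), div_rpow hδ zero_le_two, add_comm]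
  field_simp

theorem apdDensity_of_pos (ht1 : t1 < 1) {y : ℝ} (hy : 0 < y) :
    apdDensity t1 t2 y =
      apdNormConst t1 t2 * exp (-(apdDelta t1 t2 / 2) * (y / (1 - t1)) ^ t2) := by
  rw [apdDensity, apdNormConst, apdA, Real.sign_of_pos hy, abs_of_pos hy,
    div_rpow hy.le (sub_nonneg.mpr ht1.le), show (1 : ℝ) / 2 + 1 * (1 / 2 - t1) = 1 - t1 by ring]
  congr 2
  ring

theorem apdDensity_of_neg (ht1 : 0 < t1) {y : ℝ} (hy : y < 0) :
    apdDensity t1 t2 y = apdNormConst t1 t2 * exp (-(apdDelta t1 t2 / 2) * (-y / t1) ^ t2) := by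
  rw [apdDensity, apdNormConst, apdA, Real.sign_of_neg hy, abs_of_neg hy,
    div_rpow (neg_nonneg.mpr hy.le) ht1.le, show (1 : ℝ) / 2 + -1 * (1 / 2 - t1) = t1 by ring]
  congr 2
  ring

theorem apdDensity_nonneg (h1 : t1 ∈ Ioo 0 1) (h2 : 0 < t2) (y : ℝ) :
    0 ≤ apdDensity t1 t2 y := by
  have := rpow_nonneg (apdDelta_pos (t2 := t2) h1).le (1 / t2)
  unfold apdDensity
  positivity

end

theorem apd_isProbabilityDensity (t1 t2 : ℝ) (h1 : t1 ∈ Set.Ioo (0 : ℝ) 1) (h2 : 0 < t2) :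
    (∀ y : ℝ, 0 ≤ apdDensity t1 t2 y) ∧ ∫ y : ℝ, apdDensity t1 t2 y = 1 := by
  refine ⟨apdDensity_nonneg h1 h2, ?_⟩
  have hb : 0 < apdDelta t1 t2 / 2 := half_pos (apdDelta_pos h1)
  have hs : 0 < 1 - t1 := sub_pos.mpr h1.2
  rw [integral_eq_integral_Ioi_add_integral_Ioi
      ((integrableOn_exp_neg_mul_div_rpow h2 h1.1 hb).const_mul (apdNormConst t1 t2))
      ((integrableOn_exp_neg_mul_div_rpow h2 hs hb).const_mul (apdNormConst t1 t2))
      (fun y hy => apdDensity_of_neg h1.1 hy) (fun y hy => apdDensity_of_pos h1.2 hy),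
    integral_const_mul, integral_const_mul, integral_exp_neg_mul_div_rpow h2 h1.1 hb,
    integral_exp_neg_mul_div_rpow h2 hs hb, apdNormConst_eq h1, ← mul_add, ← add_mul,
    add_sub_cancel, one_mul]
  exact inv_mul_cancel₀ (by positivity)
end

section
/- Let X₁, X₂, ... be i.i.d. real random variables and ξ̂ₙ = ξ̂ₙ(X₁,...,Xₙ) estimators in ℝ^d with ξ̂ₙ → ξ almost surely. Suppose U : ℝ × ℝ^d → ℝ is measurable and there is δ > 0 such that (A.1) for all x, t ↦ U(x,t) is continuous on the closed ball B_δ[ξ], and (A.2) there exists K : ℝ → ℝ with |U(x,t)| ≤ K(x) for all (x,t) ∈ ℝ × B_δ[ξ] and E|K(X₁)| < ∞. Let ρₙ = ‖ξ̂ₙ - ξ‖₂ and Ū(t) = E[U(X₁,t)]. Then almost surely, limsup_{n→∞} sup_{t ∈ B_{ρₙ}[ξ]} |(1/n)∑_{i=1}^n U(Xᵢ,t) - Ū(ξ)| = 0. -/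
open MeasureTheory Filter ProbabilityTheory
open scoped Topology

/-! For `ε ≤ δ`, every `t` with `‖t - ξ‖ ≤ ρₙ ≤ ε` satisfies
`|Ūₙ(t) - Ū(ξ)| ≤ |Ūₙ(ξ) - Ū(ξ)| + (1/n) ∑ᵢ w_ε(Xᵢ)`, where `Ūₙ` is the empirical mean and
`w_ε(x) = sup_{‖t - ξ‖ ≤ ε} |U(x,t) - U(x,ξ)|`. As `n → ∞` the first term vanishes and, for each
`ε` of a sequence decreasing to `0` (countably many, hence almost surely simultaneously), the second
tends to `E w_ε(X₁)` by the strong law: `w_ε` is measurable, being a supremum over a countable dense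
subset of the ball, and is dominated by `2K`. Finally `E w_ε(X₁) → 0` as `ε → 0` by continuity of
`U(x, ·)` at `ξ` and dominated convergence. -/

lemma abs_avg_sub_avg_le {f g h : ℕ → ℝ} (n : ℕ) (hfg : ∀ i, |f i - g i| ≤ h i) :
    |(n : ℝ)⁻¹ * ∑ i ∈ Finset.range n, f i - (n : ℝ)⁻¹ * ∑ i ∈ Finset.range n, g i|
      ≤ (n : ℝ)⁻¹ * ∑ i ∈ Finset.range n, h i := by
  rw [← mul_sub, ← Finset.sum_sub_distrib, abs_mul, abs_inv, Nat.abs_cast]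
  gcongr
  exact (Finset.abs_sum_le_sum_abs _ _).trans (Finset.sum_le_sum fun i _ => hfg i)

lemma tendsto_zero_of_le_add_of_tendsto {ι κ : Type*} {l : Filter ι} {l' : Filter κ} [l'.NeBot]
    {s a : ι → ℝ} {b : κ → ι → ℝ} {I : κ → ℝ} (hs : ∀ n, 0 ≤ s n)
    (ha : Tendsto a l (𝓝 0)) (hb : ∀ m, Tendsto (b m) l (𝓝 (I m))) (hI : Tendsto I l' (𝓝 0))
    (hle : ∀ m, ∀ᶠ n in l, s n ≤ a n + b m n) :
    Tendsto s l (𝓝 0) := by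
  refine tendsto_order.2 ⟨fun c hc => .of_forall fun n => hc.trans_le (hs n), fun c hc => ?_⟩
  obtain ⟨m, hm⟩ := ((tendsto_order.1 hI).2 (c / 2) (by linarith)).exists
  filter_upwards [hle m, (tendsto_order.1 ha).2 (c / 2) (by linarith),
    (tendsto_order.1 (hb m)).2 (c / 2) hm] with n hn han hbn
  linarith

lemma strong_law_ae_comp {Ω β : Type*} [MeasurableSpace Ω] [MeasurableSpace β] {μ : Measure Ω}
    {X : ℕ → Ω → β} (hindep : iIndepFun X μ) (hident : ∀ i, IdentDistrib (X i) (X 0) μ μ)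
    {g : β → ℝ} (hg : Measurable g) (hint : Integrable (fun ω => g (X 0 ω)) μ) :
    ∀ᵐ ω ∂μ, Tendsto (fun n : ℕ => (n : ℝ)⁻¹ * ∑ i ∈ Finset.range n, g (X i ω)) atTop
      (𝓝 (∫ ω, g (X 0 ω) ∂μ)) :=
  strong_law_ae (fun i ω => g (X i ω)) hint
    (fun _ _ hij => (hindep.indepFun hij).comp hg hg) (fun i => (hident i).comp hg)

lemma measurable_sSup_image_of_continuousOn {α β : Type*} [MeasurableSpace α]
    [TopologicalSpace β] [SecondCountableTopology β] {g : α → β → ℝ} {S : Set β}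
    (hmeas : ∀ t ∈ S, Measurable (g · t)) (hcont : ∀ x, ContinuousOn (g x) S) :
    Measurable fun x => sSup (g x '' S) := by
  obtain ⟨D, hDcount, hDdense⟩ := TopologicalSpace.exists_countable_dense S
  have : Countable D := hDcount.to_subtype
  have hsup : ∀ x, sSup (g x '' S) = ⨆ t : D, g x t := fun x => by
    rw [sSup_image']
    exact (hDdense.ciSup' (hcont x).domRestrict).symm
  simp_rw [hsup]
  exact Measurable.iSup fun t => hmeas t t.1.2

section Oscillation

variable {α E : Type*} [PseudoMetricSpace E]

noncomputable def oscAround (U : α → E → ℝ) (ξ : E) (ε : ℝ) (x : α) : ℝ :=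
  sSup ((fun t => |U x t - U x ξ|) '' Metric.closedBall ξ ε)

variable {U : α → E → ℝ} {ξ : E} {δ ε : ℝ} {x : α} {K : α → ℝ}

lemma oscAround_nonneg : 0 ≤ oscAround U ξ ε x :=
  Real.sSup_nonneg <| by
    rintro _ ⟨t, -, rfl⟩
    exact abs_nonneg _

lemma abs_sub_le_two_mul (hbound : ∀ t ∈ Metric.closedBall ξ δ, |U x t| ≤ K x)
    {t : E} (ht : t ∈ Metric.closedBall ξ δ) : |U x t - U x ξ| ≤ 2 * K x := by
  have hξ : ξ ∈ Metric.closedBall ξ δ := Metric.mem_closedBall_self (dist_nonneg.trans ht)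
  linarith [abs_sub (U x t) (U x ξ), hbound t ht, hbound ξ hξ]

lemma oscAround_le_two_mul (hbound : ∀ t ∈ Metric.closedBall ξ δ, |U x t| ≤ K x)
    (hε : 0 ≤ ε) (hεδ : ε ≤ δ) : oscAround U ξ ε x ≤ 2 * K x :=
  csSup_le ((Metric.nonempty_closedBall.2 hε).image _) <| by
    rintro _ ⟨t, ht, rfl⟩
    exact abs_sub_le_two_mul hbound (Metric.closedBall_subset_closedBall hεδ ht)

lemma abs_sub_le_oscAround (hbound : ∀ t ∈ Metric.closedBall ξ δ, |U x t| ≤ K x)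
    (hεδ : ε ≤ δ) {t : E} (ht : t ∈ Metric.closedBall ξ ε) :
    |U x t - U x ξ| ≤ oscAround U ξ ε x := by
  refine le_csSup ⟨2 * K x, ?_⟩ (Set.mem_image_of_mem _ ht)
  rintro _ ⟨s, hs, rfl⟩
  exact abs_sub_le_two_mul hbound (Metric.closedBall_subset_closedBall hεδ hs)

lemma tendsto_oscAround_zero (hc : ContinuousAt (U x) ξ) :
    Tendsto (fun ε => oscAround U ξ ε x) (𝓝 0) (𝓝 0) := by
  refine tendsto_order.2
    ⟨fun c hc0 => .of_forall fun _ => hc0.trans_le oscAround_nonneg, fun c hc0 => ?_⟩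
  obtain ⟨r, hr, hball⟩ := Metric.continuousAt_iff.1 hc (c / 2) (by linarith)
  filter_upwards [Ioo_mem_nhds (neg_neg_of_pos hr) hr] with ε hε
  refine (Real.sSup_le ?_ (by linarith)).trans_lt (by linarith : c / 2 < c)
  rintro _ ⟨t, ht, rfl⟩
  exact (hball ((Metric.mem_closedBall.1 ht).trans_lt hε.2)).le

lemma measurable_oscAround [MeasurableSpace α] [SecondCountableTopology E]
    (hmeas : ∀ t, Measurable (U · t)) (hcont : ∀ x, ContinuousOn (U x) (Metric.closedBall ξ ε)) :
    Measurable (oscAround U ξ ε) :=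
  measurable_sSup_image_of_continuousOn
    (fun t _ => ((hmeas t).sub (hmeas ξ)).abs)
    (fun x => ((hcont x).sub continuousOn_const).abs)

lemma sSup_abs_avg_sub_le (hbound : ∀ x, ∀ t ∈ Metric.closedBall ξ δ, |U x t| ≤ K x)
    (hεδ : ε ≤ δ) {ρ : ℝ} (hρ : 0 ≤ ρ) (hρε : ρ ≤ ε) (x : ℕ → α) (n : ℕ) (M : ℝ) :
    sSup ((fun t => |(n : ℝ)⁻¹ * ∑ i ∈ Finset.range n, U (x i) t - M|) '' Metric.closedBall ξ ρ)
      ≤ |(n : ℝ)⁻¹ * ∑ i ∈ Finset.range n, U (x i) ξ - M|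
        + (n : ℝ)⁻¹ * ∑ i ∈ Finset.range n, oscAround U ξ ε (x i) := by
  refine csSup_le ((Metric.nonempty_closedBall.2 hρ).image _) ?_
  rintro _ ⟨t, ht, rfl⟩
  have hosc := abs_avg_sub_avg_le n fun i =>
    abs_sub_le_oscAround (hbound (x i)) hεδ (Metric.closedBall_subset_closedBall hρε ht)
  linarith [abs_sub_le ((n : ℝ)⁻¹ * ∑ i ∈ Finset.range n, U (x i) t)
    ((n : ℝ)⁻¹ * ∑ i ∈ Finset.range n, U (x i) ξ) M]

end Oscillation

theorem ulln_over_shrinking_balls_general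
    {Ω : Type*} [MeasureSpace Ω]
    {d : ℕ} (X : ℕ → Ω → ℝ) (hXmeas : ∀ i, Measurable (X i))
    (hindep : ProbabilityTheory.iIndepFun X (ℙ : Measure Ω))
    (hident : ∀ i, Measure.map (X i) ℙ = Measure.map (X 0) (ℙ : Measure Ω))
    (ξhat : ℕ → Ω → EuclideanSpace ℝ (Fin d)) (ξ : EuclideanSpace ℝ (Fin d))
    (hcons : ∀ᵐ ω ∂(ℙ : Measure Ω), Tendsto (fun n => ξhat n ω) atTop (nhds ξ))
    (U : ℝ → EuclideanSpace ℝ (Fin d) → ℝ)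
    (hUmeas : Measurable (Function.uncurry U))
    (δ : ℝ) (hδ : 0 < δ)
    (hcont : ∀ x : ℝ, ContinuousOn (U x) (Metric.closedBall ξ δ))
    (K : ℝ → ℝ)
    (hbound : ∀ x : ℝ, ∀ t ∈ Metric.closedBall ξ δ, |U x t| ≤ K x)
    (hKint : Integrable (fun ω => K (X 0 ω)) (ℙ : Measure Ω)) :
    ∀ᵐ ω ∂(ℙ : Measure Ω),
      Filter.limsup
        (fun n : ℕ =>
          sSup ((fun t => |(n : ℝ)⁻¹ * ∑ i ∈ Finset.range n, U (X i ω) t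
              - ∫ ω', U (X 0 ω') ξ ∂(ℙ : Measure Ω)|) ''
            Metric.closedBall ξ (dist (ξhat n ω) ξ)))
        atTop = 0 := by
  obtain ⟨ε, -, hε_mem, hε_lim⟩ := exists_seq_strictAnti_tendsto' hδ
  have hεδ : ∀ m, ε m ≤ δ := fun m => (hε_mem m).2.le
  have hUt : ∀ t, Measurable (U · t) := fun t => hUmeas.of_uncurry_right
  have hid : ∀ i, IdentDistrib (X i) (X 0) :=
    fun i => ⟨(hXmeas i).aemeasurable, (hXmeas 0).aemeasurable, hident i⟩
  have hosc_meas : ∀ m, Measurable (oscAround U ξ (ε m)) := fun m =>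
    measurable_oscAround hUt fun x => (hcont x).mono (Metric.closedBall_subset_closedBall (hεδ m))
  have hosc_dom : ∀ m ω, ‖oscAround U ξ (ε m) (X 0 ω)‖ ≤ 2 * K (X 0 ω) := fun m ω => by
    rw [Real.norm_of_nonneg oscAround_nonneg]
    exact oscAround_le_two_mul (hbound _) (hε_mem m).1.le (hεδ m)
  have hosc_int : ∀ m, Integrable (fun ω => oscAround U ξ (ε m) (X 0 ω)) := fun m =>
    (hKint.const_mul 2).mono' ((hosc_meas m).comp (hXmeas 0)).aestronglyMeasurable
      (.of_forall (hosc_dom m))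
  have hUξ_int : Integrable (fun ω => U (X 0 ω) ξ) :=
    hKint.mono' ((hUt ξ).comp (hXmeas 0)).aestronglyMeasurable
      (.of_forall fun ω => hbound _ ξ (Metric.mem_closedBall_self hδ.le))
  have hosc_lim : Tendsto (fun m => ∫ ω, oscAround U ξ (ε m) (X 0 ω)) atTop (𝓝 0) := by
    simpa using tendsto_integral_of_dominated_convergence _
      (fun m => ((hosc_meas m).comp (hXmeas 0)).aestronglyMeasurable) (hKint.const_mul 2)
      (fun m => .of_forall (hosc_dom m)) (.of_forall fun ω => (tendsto_oscAround_zero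
        ((hcont _).continuousAt (Metric.closedBall_mem_nhds ξ hδ))).comp hε_lim)
  filter_upwards [hcons, strong_law_ae_comp hindep hid (hUt ξ) hUξ_int,
    ae_all_iff.2 fun m => strong_law_ae_comp hindep hid (hosc_meas m) (hosc_int m)]
    with ω hω hωξ hωosc
  have hρ := tendsto_iff_dist_tendsto_zero.1 hω
  have hωξ' := (hωξ.sub_const (∫ ω', U (X 0 ω') ξ)).abs
  rw [sub_self, abs_zero] at hωξ'
  refine Tendsto.limsup_eq <| tendsto_zero_of_le_add_of_tendsto
    (fun n => Real.sSup_nonneg ?_) hωξ' hωosc hosc_lim fun m => ?_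
  · rintro _ ⟨t, -, rfl⟩
    exact abs_nonneg _
  · filter_upwards [(tendsto_order.1 hρ).2 (ε m) (hε_mem m).1] with n hn
    exact sSup_abs_avg_sub_le hbound (hεδ m) dist_nonneg hn.le _ n _

/-- Uniform law of large numbers over shrinking random balls around `ξ`
(Le Cam-type ULLN, Lemma 1 in the paper). -/
theorem ulln_over_shrinking_balls
    {Ω : Type*} [MeasureSpace Ω] [IsProbabilityMeasure (ℙ : Measure Ω)]
    {d : ℕ} (X : ℕ → Ω → ℝ) (hXmeas : ∀ i, Measurable (X i))
    (hindep : ProbabilityTheory.iIndepFun X (ℙ : Measure Ω))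
    (hident : ∀ i, Measure.map (X i) ℙ = Measure.map (X 0) (ℙ : Measure Ω))
    (ξhat : ℕ → Ω → EuclideanSpace ℝ (Fin d)) (ξ : EuclideanSpace ℝ (Fin d))
    (hcons : ∀ᵐ ω ∂(ℙ : Measure Ω), Tendsto (fun n => ξhat n ω) atTop (nhds ξ))
    (U : ℝ → EuclideanSpace ℝ (Fin d) → ℝ)
    (hUmeas : Measurable (Function.uncurry U))
    (δ : ℝ) (hδ : 0 < δ)
    (hcont : ∀ x : ℝ, ContinuousOn (U x) (Metric.closedBall ξ δ))
    (K : ℝ → ℝ)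
    (hbound : ∀ x : ℝ, ∀ t ∈ Metric.closedBall ξ δ, |U x t| ≤ K x)
    (hKint : Integrable (fun ω => K (X 0 ω)) (ℙ : Measure Ω)) :
    ∀ᵐ ω ∂(ℙ : Measure Ω),
      Filter.limsup
        (fun n : ℕ =>
          sSup ((fun t => |(n : ℝ)⁻¹ * ∑ i ∈ Finset.range n, U (X i ω) t
              - ∫ ω', U (X 0 ω') ξ ∂(ℙ : Measure Ω)|) ''
            Metric.closedBall ξ (dist (ξhat n ω) ξ)))
        atTop = 0 :=
  ulln_over_shrinking_balls_general X hXmeas hindep hident ξhat ξ hcons U hUmeas δ hδ hcont K hbound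
    hKint
end
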